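/- arXiv:2007.03267 — 3 statements merged into one kernel-verified Lean document; each statement's English description precedes it below -/
import Mathlib

section
/- Carlitz's identity: for |q| < 1 and |t| < 1, ∑_{k=0}^∞ s_k(1|q) t^k / (q;q)_k = 1/((t;q)_∞)^2, where s_k(1|q) = ∑_{j=0}^k [k choose j]_q. -/
/-!
Both sides are expressed through Euler's `q`-exponential `e_q(t) = ∑ tⁿ / (q;q)ₙ`. The identity
`[n choose k]_q (q;q)_k (q;q)_{n-k} = (q;q)_n` turns the `n`-th term of the left-hand side into the
`n`-th coefficient of the Cauchy square `e_q(t)²`. Euler's identity `e_q(t) (t;q)_∞ = 1` comes from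
the functional equation `e_q(qs) = (1 - s) e_q(s)`: iterating it gives
`e_q(t) ∏_{j<N} (1 - t qʲ) = e_q(q^N t)`, which tends to `e_q(0) = 1` by dominated convergence.
-/

/-- The Gaussian (q-)binomial coefficient, defined via the q-Pascal rule. -/
def gaussBinom (q : ℂ) : ℕ → ℕ → ℂ
  | _, 0 => 1
  | 0, _ + 1 => 0
  | n + 1, k + 1 => gaussBinom q n k + q ^ (k + 1) * gaussBinom q n (k + 1)

/-- The Rogers–Szegő polynomial `s_n(x|q)`. -/
noncomputable def rogersSzego (q x : ℂ) (n : ℕ) : ℂ :=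
  ∑ k ∈ Finset.range (n + 1), gaussBinom q n k * x ^ k

open Finset Filter Topology

/-- `qPochhammer q n` is `(q;q)ₙ`. -/
noncomputable def qPochhammer (q : ℂ) (n : ℕ) : ℂ := ∏ j ∈ range n, (1 - q ^ (j + 1))

/-- Euler's `q`-exponential `e_q(s)`. -/
noncomputable def qExp (q s : ℂ) : ℂ := ∑' n, s ^ n / qPochhammer q n

section Algebra

variable (q : ℂ)

@[simp]
lemma qPochhammer_zero : qPochhammer q 0 = 1 := prod_range_zero _

lemma qPochhammer_succ (n : ℕ) : qPochhammer q (n + 1) = qPochhammer q n * (1 - q ^ (n + 1)) :=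
  prod_range_succ _ n

@[simp]
lemma gaussBinom_zero_right (n : ℕ) : gaussBinom q n 0 = 1 := by cases n <;> rfl

lemma gaussBinom_eq_zero_of_lt {n k : ℕ} (h : n < k) : gaussBinom q n k = 0 := by
  induction n generalizing k with
  | zero => obtain ⟨k, rfl⟩ := Nat.exists_eq_succ_of_ne_zero h.ne'; rfl
  | succ n ih =>
    obtain ⟨k, rfl⟩ := Nat.exists_eq_succ_of_ne_zero (by omega : k ≠ 0)
    rw [gaussBinom, ih (by omega), ih (by omega), mul_zero, add_zero]

@[simp]
lemma gaussBinom_self (n : ℕ) : gaussBinom q n n = 1 := by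
  induction n with
  | zero => rfl
  | succ n ih => rw [gaussBinom, ih, gaussBinom_eq_zero_of_lt q n.lt_succ_self, mul_zero, add_zero]

lemma gaussBinom_add_mul_qPochhammer (k m : ℕ) :
    gaussBinom q (k + m) k * qPochhammer q k * qPochhammer q m = qPochhammer q (k + m) := by
  induction m generalizing k with
  | zero => simp
  | succ m ihm =>
    induction k with
    | zero => simp
    | succ k ihk =>
      have h₁ : gaussBinom q (k + m + 1) k * qPochhammer q k * qPochhammer q (m + 1) =
          qPochhammer q (k + m + 1) := ihk
      have h₂ : gaussBinom q (k + m + 1) (k + 1) * qPochhammer q (k + 1) * qPochhammer q m =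
          qPochhammer q (k + m + 1) := by rw [Nat.add_right_comm]; exact ihm (k + 1)
      rw [show k + 1 + (m + 1) = k + m + 1 + 1 by omega, gaussBinom, qPochhammer_succ q (k + m + 1)]
      rw [qPochhammer_succ q k] at h₂ ⊢
      rw [qPochhammer_succ q m] at h₁ ⊢
      linear_combination (1 - q ^ (k + 1)) * h₁ + q ^ (k + 1) * (1 - q ^ (m + 1)) * h₂

lemma rogersSzego_one_mul_pow_div (t : ℂ) {n : ℕ} (hn : qPochhammer q n ≠ 0) :
    rogersSzego q 1 n * t ^ n / qPochhammer q n =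
      ∑ p ∈ antidiagonal n, t ^ p.1 / qPochhammer q p.1 * (t ^ p.2 / qPochhammer q p.2) := by
  rw [rogersSzego, sum_mul, sum_div]
  refine (Nat.sum_antidiagonal_eq_sum_range_succ
    (fun i _ => gaussBinom q n i * 1 ^ i * t ^ n / qPochhammer q n) n).symm.trans
    (sum_congr rfl ?_)
  rintro ⟨i, j⟩ hij
  rw [HasAntidiagonal.mem_antidiagonal] at hij
  subst hij
  have h := gaussBinom_add_mul_qPochhammer q i j
  have hij : qPochhammer q i * qPochhammer q j ≠ 0 := by
    rw [← h, mul_assoc] at hn; exact right_ne_zero_of_mul hn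
  rw [div_mul_div_comm, ← pow_add, div_eq_div_iff hn hij]
  linear_combination t ^ (i + j) * h

end Algebra

section Analysis

variable {q : ℂ}

lemma one_sub_pow_succ_ne_zero (hq : ‖q‖ < 1) (n : ℕ) : 1 - q ^ (n + 1) ≠ 0 := by
  refine sub_ne_zero.2 fun h => ?_
  have : ‖q ^ (n + 1)‖ < 1 := by rw [norm_pow]; exact pow_lt_one₀ (norm_nonneg q) hq n.succ_ne_zero
  rw [← h, norm_one] at this
  exact lt_irrefl _ this

lemma qPochhammer_ne_zero (hq : ‖q‖ < 1) (n : ℕ) : qPochhammer q n ≠ 0 :=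
  prod_ne_zero_iff.2 fun j _ => one_sub_pow_succ_ne_zero hq j

/-- The ratio of consecutive terms is `t / (1 - qⁿ⁺¹) → t`. -/
lemma summable_norm_pow_div_qPochhammer (hq : ‖q‖ < 1) {t : ℂ} (ht : ‖t‖ < 1) :
    Summable fun n => ‖t ^ n / qPochhammer q n‖ := by
  obtain ⟨r, htr, hr⟩ := exists_between ht
  have hratio : Tendsto (fun n => ‖t‖ / ‖1 - q ^ (n + 1)‖) atTop (𝓝 ‖t‖) := by
    have h : Tendsto (fun n => 1 - q ^ (n + 1)) atTop (𝓝 1) := by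
      simpa using tendsto_const_nhds.sub
        ((tendsto_pow_atTop_nhds_zero_of_norm_lt_one hq).comp (tendsto_add_atTop_nat 1))
    simpa [div_eq_mul_inv] using (h.norm.inv₀ (by simp)).const_mul ‖t‖
  refine summable_of_ratio_norm_eventually_le hr ?_
  filter_upwards [hratio.eventually_le_const htr] with n hn
  rw [norm_norm, norm_norm, pow_succ, qPochhammer_succ, ← div_mul_div_comm, norm_mul,
    norm_div t, mul_comm r]
  exact mul_le_mul_of_nonneg_left hn (norm_nonneg _)

lemma qExp_mul_eq (hq : ‖q‖ < 1) {s : ℂ} (hs : ‖s‖ < 1) :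
    qExp q (q * s) = qExp q s * (1 - s) := by
  have hqs : ‖q * s‖ < 1 := by
    rw [norm_mul]; exact (mul_le_of_le_one_left (norm_nonneg s) hq.le).trans_lt hs
  have hs' := (summable_norm_pow_div_qPochhammer hq hs).of_norm
  have hqs' := (summable_norm_pow_div_qPochhammer hq hqs).of_norm
  have hshift (n : ℕ) : s ^ (n + 1) / qPochhammer q (n + 1) - (q * s) ^ (n + 1) /
      qPochhammer q (n + 1) = s * (s ^ n / qPochhammer q n) := by
    have := one_sub_pow_succ_ne_zero hq n
    rw [qPochhammer_succ]
    field_simp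
    ring
  have hsub : qExp q s - qExp q (q * s) = s * qExp q s := by
    rw [qExp, qExp, ← hs'.tsum_sub hqs', (hs'.sub hqs').tsum_eq_zero_add]
    simp only [hshift, tsum_mul_left, pow_zero, qPochhammer_zero, sub_self, zero_add]
  linear_combination -hsub

lemma qExp_mul_prod (hq : ‖q‖ < 1) {t : ℂ} (ht : ‖t‖ < 1) (N : ℕ) :
    qExp q t * ∏ j ∈ range N, (1 - t * q ^ j) = qExp q (q ^ N * t) := by
  induction N with
  | zero => simp
  | succ N ih =>
    have hN : ‖q ^ N * t‖ < 1 := by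
      rw [norm_mul, norm_pow]
      exact (mul_le_of_le_one_left (norm_nonneg t) (pow_le_one₀ (norm_nonneg q) hq.le)).trans_lt ht
    rw [prod_range_succ, ← mul_assoc, ih, pow_succ', mul_assoc, qExp_mul_eq hq hN, mul_comm t]

lemma tendsto_qExp_pow_mul (hq : ‖q‖ < 1) {t : ℂ} (ht : ‖t‖ < 1) :
    Tendsto (fun N => qExp q (q ^ N * t)) atTop (𝓝 1) := by
  have hpow : Tendsto (fun N => q ^ N * t) atTop (𝓝 0) := by
    simpa using (tendsto_pow_atTop_nhds_zero_of_norm_lt_one hq).mul_const t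
  have hlim := tendsto_tsum_of_dominated_convergence (summable_norm_pow_div_qPochhammer hq ht)
    (fun n => (hpow.pow n).div_const (qPochhammer q n)) (Eventually.of_forall fun N n => ?_)
  · rwa [tsum_eq_single 0 fun n hn => by simp [hn], pow_zero, qPochhammer_zero, div_one] at hlim
  rw [norm_div, norm_div, norm_pow, norm_pow]
  gcongr
  rw [norm_mul, norm_pow]
  exact mul_le_of_le_one_left (norm_nonneg t) (pow_le_one₀ (norm_nonneg q) hq.le)

lemma multipliable_one_sub_mul_pow (hq : ‖q‖ < 1) (t : ℂ) :
    Multipliable fun j : ℕ => 1 - t * q ^ j := by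
  simpa [sub_eq_add_neg] using multipliable_one_add_of_summable (f := fun j : ℕ => -(t * q ^ j))
    (by simpa using (summable_geometric_of_lt_one (norm_nonneg q) hq).mul_left ‖t‖)

theorem qExp_mul_tprod (hq : ‖q‖ < 1) {t : ℂ} (ht : ‖t‖ < 1) :
    qExp q t * ∏' j : ℕ, (1 - t * q ^ j) = 1 :=
  tendsto_nhds_unique
    (((multipliable_one_sub_mul_pow hq t).hasProd.tendsto_prod_nat.const_mul _).congr
      (qExp_mul_prod hq ht))
    (tendsto_qExp_pow_mul hq ht)

end Analysis

/-- Carlitz's identity: `∑_k s_k(1|q) t^k/(q;q)_k = 1/(t;q)_∞²` for `|q|,|t| < 1`. -/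
theorem carlitz_identity (q t : ℂ) (hq : ‖q‖ < 1) (ht : ‖t‖ < 1) :
    (∑' k : ℕ, rogersSzego q 1 k * t ^ k / ∏ j ∈ Finset.range k, (1 - q ^ (j + 1))) =
      ((∏' j : ℕ, (1 - t * q ^ j)) ^ 2)⁻¹ := by
  have hsum := summable_norm_pow_div_qPochhammer hq ht
  calc (∑' k : ℕ, rogersSzego q 1 k * t ^ k / qPochhammer q k)
      = ∑' k : ℕ, ∑ p ∈ antidiagonal k,
          t ^ p.1 / qPochhammer q p.1 * (t ^ p.2 / qPochhammer q p.2) :=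
        tsum_congr fun k => rogersSzego_one_mul_pow_div q t (qPochhammer_ne_zero hq k)
    _ = qExp q t * qExp q t :=
        (tsum_mul_tsum_eq_tsum_sum_antidiagonal_of_summable_norm hsum hsum).symm
    _ = ((∏' j : ℕ, (1 - t * q ^ j)) ^ 2)⁻¹ := by
        rw [eq_inv_of_mul_eq_one_left (qExp_mul_tprod hq ht), ← mul_inv, sq]
end

section
/- Connection coefficient formula: for all n ≥ 0 and all x, q, the Chebyshev polynomial of the second kind satisfies U_n(x) = ∑_{j=0}^{⌊n/2⌋} (-1)^j q^{j(j+1)/2} [n-j choose j]_q h_{n-2j}(x|q). -/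
/-- The continuous q-Hermite polynomials. -/
def qHermite (q x : ℂ) : ℕ → ℂ
  | 0 => 1
  | 1 => 2 * x
  | n + 2 => 2 * x * qHermite q x (n + 1) - (1 - q ^ (n + 1)) * qHermite q x n

/-- The Chebyshev polynomials of the second kind. -/
def chebU (x : ℂ) : ℕ → ℂ
  | 0 => 1
  | 1 => 2 * x
  | n + 2 => 2 * x * chebU x (n + 1) - chebU x n

lemma gauss_def (q : ℂ) (m k : ℕ) :
    gaussBinom q (m + 1) (k + 1) = gaussBinom q m k + q ^ (k + 1) * gaussBinom q m (k + 1) := by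
  simp [gaussBinom]

lemma gauss_zero_right (q : ℂ) (m : ℕ) : gaussBinom q m 0 = 1 := by
  cases m <;> simp [gaussBinom]

lemma gauss_eq_zero (q : ℂ) : ∀ m k, m < k → gaussBinom q m k = 0 := by
  intro m
  induction m with
  | zero =>
    intro k hk
    match k, hk with
    | k + 1, _ => simp [gaussBinom]
  | succ m ih =>
    intro k hk
    match k, hk with
    | k + 1, hk =>
      rw [gauss_def, ih k (by omega), ih (k + 1) (by omega)]
      ring

lemma gauss_diag (q : ℂ) : ∀ m, gaussBinom q m m = 1 := by
  intro m
  induction m with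
  | zero => simp [gaussBinom]
  | succ m ih => rw [gauss_def, ih, gauss_eq_zero q m (m + 1) (by omega)]; ring

lemma gauss_one (q : ℂ) : ∀ n, gaussBinom q (n + 1) 1 = q ^ n + gaussBinom q n 1 := by
  intro n
  induction n with
  | zero => simp [gaussBinom]
  | succ n ih =>
    have d1 : gaussBinom q (n + 2) 1 = 1 + q ^ (0 + 1) * gaussBinom q (n + 1) 1 := by
      rw [gauss_def, gauss_zero_right]
    have d2 : gaussBinom q (n + 1) 1 = 1 + q ^ (0 + 1) * gaussBinom q n 1 := by
      rw [gauss_def, gauss_zero_right]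
    linear_combination d1 + q * ih - d2

/-- The dual q-Pascal rule. -/
lemma gauss_pascal' (q : ℂ) : ∀ m n k, n + k = m →
    gaussBinom q (n + k + 1) (k + 1)
      = q ^ n * gaussBinom q (n + k) k + gaussBinom q (n + k) (k + 1) := by
  intro m
  induction m using Nat.strong_induction_on with
  | _ m ih =>
    intro n k hm
    match n, k with
    | n, 0 => simpa [gauss_zero_right] using gauss_one q n
    | 0, k + 1 =>
      simp [gauss_diag, gauss_eq_zero q (k + 1) (k + 2) (by omega)]
    | n + 1, k + 1 =>
      have hXd : gaussBinom q (n + k + 2) (k + 1)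
          = gaussBinom q (n + k + 1) k + q ^ (k + 1) * gaussBinom q (n + k + 1) (k + 1) :=
        gauss_def q (n + k + 1) k
      have hXi := ih (n + 1 + k) (by omega) (n + 1) k rfl
      have hYd : gaussBinom q (n + k + 2) (k + 2)
          = gaussBinom q (n + k + 1) (k + 1) + q ^ (k + 2) * gaussBinom q (n + k + 1) (k + 2) :=
        gauss_def q (n + k + 1) (k + 1)
      have hYi := ih (n + (k + 1)) (by omega) n (k + 1) rfl
      rw [show n + 1 + k = n + k + 1 by omega,
        show n + k + 1 + 1 = n + k + 2 by omega] at hXi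
      rw [show n + (k + 1) = n + k + 1 by omega,
        show n + k + 1 + 1 = n + k + 2 by omega,
        show k + 1 + 1 = k + 2 by omega] at hYi
      rw [show n + 1 + (k + 1) + 1 = n + k + 3 by omega,
        show n + 1 + (k + 1) = n + k + 2 by omega,
        show k + 1 + 1 = k + 2 by omega]
      have hgoal : gaussBinom q (n + k + 3) (k + 2)
          = gaussBinom q (n + k + 2) (k + 1) + q ^ (k + 2) * gaussBinom q (n + k + 2) (k + 2) :=
        gauss_def q (n + k + 2) (k + 1)
      rw [hgoal]
      linear_combination (-(q ^ (n + 1))) * hXd + hXi - hYd + q ^ (k + 2) * hYi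

lemma gauss_pascal (q : ℂ) (n k : ℕ) :
    gaussBinom q (n + k + 1) (k + 1)
      = q ^ n * gaussBinom q (n + k) k + gaussBinom q (n + k) (k + 1) :=
  gauss_pascal' q (n + k) n k rfl

lemma hrec (q x : ℂ) (m : ℕ) :
    2 * x * qHermite q x m
      = qHermite q x (m + 1) + (1 - q ^ m) * qHermite q x (m - 1) := by
  match m with
  | 0 => simp [qHermite]
  | k + 1 =>
    have h2 : qHermite q x (k + 2)
        = 2 * x * qHermite q x (k + 1) - (1 - q ^ (k + 1)) * qHermite q x k := by
      simp [qHermite]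
    rw [h2]
    simp only [Nat.add_sub_cancel]
    ring

/-- Connection coefficients. -/
noncomputable def cc (q : ℂ) (n j : ℕ) : ℂ :=
  (-1) ^ j * q ^ (j * (j + 1) / 2) * gaussBinom q (n - j) j

lemma cc_zero (q : ℂ) (n j : ℕ) (h : n < 2 * j) : cc q n j = 0 := by
  unfold cc
  rw [gauss_eq_zero q (n - j) j (by omega)]
  ring

lemma cc_zero' (q : ℂ) (n : ℕ) : cc q n 0 = 1 := by
  simp [cc, gauss_zero_right]

lemma star_all (q : ℂ) (n j : ℕ) :
    cc q (n + 2) (j + 1) - cc q (n + 1) (j + 1)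
      = cc q (n + 1) j * (1 - q ^ (n + 1 - 2 * j)) - cc q n j := by
  rcases lt_or_ge n (2 * j) with h | h
  · -- degenerate cases
    rw [cc_zero q (n + 2) (j + 1) (by omega), cc_zero q (n + 1) (j + 1) (by omega)]
    rcases eq_or_lt_of_le (show n + 1 ≤ 2 * j by omega) with heq | hlt
    · rw [show n + 1 - 2 * j = 0 by omega, cc_zero q n j (by omega)]
      ring
    · rw [cc_zero q (n + 1) j (by omega), cc_zero q n j (by omega)]
      ring
  · -- main case: 2*j ≤ n
    obtain ⟨d, rfl⟩ : ∃ d, n = 2 * j + d := ⟨n - 2 * j, by omega⟩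
    match j with
    | 0 =>
      simp only [cc_zero']
      unfold cc
      rw [show 2 * 0 + d + 2 - 1 = d + 1 by omega, show 2 * 0 + d + 1 - 1 = d by omega,
        show 2 * 0 + d + 1 - 2 * 0 = d + 1 by omega]
      have h1 := gauss_one q d
      norm_num
      linear_combination (-q) * h1
    | i + 1 =>
      unfold cc
      have hT : (i + 1 + 1) * (i + 1 + 1 + 1) / 2 = (i + 1) * (i + 1 + 1) / 2 + (i + 2) := by
        have h' : (i + 1 + 1) * (i + 1 + 1 + 1) = (i + 1) * (i + 1 + 1) + 2 * (i + 2) := by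
          ring
        omega
      rw [show 2 * (i + 1) + d + 2 - (i + 1 + 1) = i + d + 2 by omega,
        show 2 * (i + 1) + d + 1 - (i + 1 + 1) = i + d + 1 by omega,
        show 2 * (i + 1) + d + 1 - (i + 1) = i + d + 2 by omega,
        show 2 * (i + 1) + d - (i + 1) = i + d + 1 by omega,
        show 2 * (i + 1) + d + 1 - 2 * (i + 1) = d + 1 by omega,
        hT, pow_add]
      have F1 := gauss_pascal q d (i + 1)
      have F2 := gauss_pascal q (d + 1) i
      have F3 := gauss_def q (i + d + 1) i
      rw [show d + (i + 1) + 1 = i + d + 2 by omega,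
        show d + (i + 1) = i + d + 1 by omega,
        show i + 1 + 1 = i + 2 by omega] at F1
      rw [show d + 1 + i + 1 = i + d + 2 by omega,
        show d + 1 + i = i + d + 1 by omega] at F2
      rw [show i + d + 1 + 1 = i + d + 2 by omega] at F3
      rw [show i + 1 + 1 = i + 2 by omega]
      linear_combination ((-1:ℂ) ^ (i + 2) * q ^ ((i + 1) * (i + 1 + 1) / 2) * q ^ (i + 2)) * F1
        - ((-1:ℂ) ^ (i + 1) * q ^ ((i + 1) * (i + 1 + 1) / 2)) * F2
        + ((-1:ℂ) ^ (i + 1) * q ^ ((i + 1) * (i + 1 + 1) / 2) * q ^ (d + 1)) * F3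

/-- `U_n(x) = ∑_{j=0}^{⌊n/2⌋} (-1)^j q^{j(j+1)/2} [n-j choose j]_q h_{n-2j}(x|q)`. -/
theorem chebU_eq_sum_qHermite (n : ℕ) (x q : ℂ) :
    chebU x n =
      ∑ j ∈ Finset.range (n / 2 + 1),
        (-1) ^ j * q ^ (j * (j + 1) / 2) * gaussBinom q (n - j) j *
          qHermite q x (n - 2 * j) := by
  have key : ∀ m, chebU x m
      = ∑ j ∈ Finset.range (m + 1), cc q m j * qHermite q x (m - 2 * j) := by
    intro m
    induction m using Nat.twoStepInduction with
    | zero => simp [chebU, cc, gaussBinom, qHermite]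
    | one =>
      rw [Finset.sum_range_succ, Finset.sum_range_succ, Finset.sum_range_zero]
      rw [cc_zero q 1 1 (by omega), cc_zero']
      simp [chebU, qHermite]
    | more m ih0 ih1 =>
      have hU : chebU x (m + 2) = 2 * x * chebU x (m + 1) - chebU x m := by
        simp [chebU]
      rw [hU, ih0, ih1, show m + 1 + 1 = m + 2 by omega]
      -- extend all sums to range (m + 3)
      have ext1 : ∑ j ∈ Finset.range (m + 2), cc q (m + 1) j * qHermite q x (m + 1 - 2 * j)
          = ∑ j ∈ Finset.range (m + 3), cc q (m + 1) j * qHermite q x (m + 1 - 2 * j) := by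
        apply Finset.sum_subset (Finset.range_subset_range.2 (by omega))
        intro j hj hnj
        rw [cc_zero q (m + 1) j (by simp [Finset.mem_range] at hj hnj; omega)]
        ring
      have ext0 : ∑ j ∈ Finset.range (m + 1), cc q m j * qHermite q x (m - 2 * j)
          = ∑ j ∈ Finset.range (m + 3), cc q m j * qHermite q x (m - 2 * j) := by
        apply Finset.sum_subset (Finset.range_subset_range.2 (by omega))
        intro j hj hnj
        rw [cc_zero q m j (by simp [Finset.mem_range] at hj hnj; omega)]
        ring
      rw [ext1, ext0, Finset.mul_sum]
      have split : ∀ j ∈ Finset.range (m + 3),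
          2 * x * (cc q (m + 1) j * qHermite q x (m + 1 - 2 * j))
            = cc q (m + 1) j * qHermite q x (m + 2 - 2 * j)
              + cc q (m + 1) j * (1 - q ^ (m + 1 - 2 * j)) * qHermite q x (m - 2 * j) := by
        intro j _
        rcases le_or_gt (2 * j) (m + 1) with hP | hP
        · have hr := hrec q x (m + 1 - 2 * j)
          rw [show m + 1 - 2 * j + 1 = m + 2 - 2 * j by omega,
            show m + 1 - 2 * j - 1 = m - 2 * j by omega] at hr
          calc 2 * x * (cc q (m + 1) j * qHermite q x (m + 1 - 2 * j))
              = cc q (m + 1) j * (2 * x * qHermite q x (m + 1 - 2 * j)) := by ring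
            _ = _ := by rw [hr]; ring
        · rw [cc_zero q (m + 1) j (by omega)]
          ring
      rw [Finset.sum_congr rfl split, Finset.sum_add_distrib,
        show m + 2 + 1 = m + 3 by omega]
      -- the key identity between the shifted sums
      have E : ∑ j ∈ Finset.range (m + 3), cc q (m + 2) j * qHermite q x (m + 2 - 2 * j)
            - ∑ j ∈ Finset.range (m + 3), cc q (m + 1) j * qHermite q x (m + 2 - 2 * j)
          = ∑ j ∈ Finset.range (m + 3),
              cc q (m + 1) j * (1 - q ^ (m + 1 - 2 * j)) * qHermite q x (m - 2 * j)
            - ∑ j ∈ Finset.range (m + 3), cc q m j * qHermite q x (m - 2 * j) := by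
        rw [← Finset.sum_sub_distrib, ← Finset.sum_sub_distrib]
        have lhs_eq : ∑ j ∈ Finset.range (m + 3),
            (cc q (m + 2) j * qHermite q x (m + 2 - 2 * j)
              - cc q (m + 1) j * qHermite q x (m + 2 - 2 * j))
            = ∑ j ∈ Finset.range (m + 3),
              (cc q (m + 2) j - cc q (m + 1) j) * qHermite q x (m + 2 - 2 * j) :=
          Finset.sum_congr rfl (fun j _ => by ring)
        have rhs_eq : ∑ j ∈ Finset.range (m + 3),
            (cc q (m + 1) j * (1 - q ^ (m + 1 - 2 * j)) * qHermite q x (m - 2 * j)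
              - cc q m j * qHermite q x (m - 2 * j))
            = ∑ j ∈ Finset.range (m + 3),
              (cc q (m + 1) j * (1 - q ^ (m + 1 - 2 * j)) - cc q m j)
                * qHermite q x (m - 2 * j) :=
          Finset.sum_congr rfl (fun j _ => by ring)
        rw [lhs_eq, rhs_eq]
        rw [Finset.sum_range_succ' (fun j =>
          (cc q (m + 2) j - cc q (m + 1) j) * qHermite q x (m + 2 - 2 * j)) (m + 2)]
        rw [Finset.sum_range_succ (fun j =>
          (cc q (m + 1) j * (1 - q ^ (m + 1 - 2 * j)) - cc q m j)
            * qHermite q x (m - 2 * j)) (m + 2)]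
        rw [cc_zero q (m + 1) (m + 2) (by omega), cc_zero q m (m + 2) (by omega)]
        simp only [cc_zero', sub_self, zero_mul, mul_zero, zero_sub, add_zero, neg_zero,
          zero_mul, sub_zero]
        apply Finset.sum_congr rfl
        intro j _
        rw [show m + 2 - 2 * (j + 1) = m - 2 * j by omega, star_all]
      linear_combination -E
  rw [key n]
  rw [← Finset.sum_subset (Finset.range_subset_range.2 (show n / 2 + 1 ≤ n + 1 by omega))
    (fun j hj hnj => by
      rw [cc_zero q n j (by simp [Finset.mem_range] at hj hnj; omega)]
      ring)]
  apply Finset.sum_congr rfl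
  intro j _
  simp [cc]
end

section
/- For all n ≥ 0 and all x, q, h_n(x|q) = ∑_{k=0}^{n} [n choose k]_q T_{n-2k}(x), where T_m denotes the Chebyshev polynomial of the first kind extended by T_{-m}(x) = T_m(x). -/
/-- The Chebyshev polynomials of the first kind. -/
def chebT (x : ℂ) : ℕ → ℂ
  | 0 => 1
  | 1 => x
  | n + 2 => 2 * x * chebT x (n + 1) - chebT x n

lemma gb_zero (q : ℂ) : ∀ n k : ℕ, n < k → gaussBinom q n k = 0 := by
  intro n
  induction n with
  | zero => intro k hk; match k, hk with | k+1, _ => rfl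
  | succ n ih =>
    intro k hk
    match k, hk with
    | k+1, hk =>
      show gaussBinom q n k + q ^ (k + 1) * gaussBinom q n (k + 1) = 0
      rw [ih k (by omega), ih (k+1) (by omega)]; ring
lemma gb_succ_succ (q : ℂ) (n k : ℕ) :
    gaussBinom q (n+1) (k+1) = gaussBinom q n k + q ^ (k + 1) * gaussBinom q n (k + 1) := rfl
lemma gb_zero_right (q : ℂ) (n : ℕ) : gaussBinom q n 0 = 1 := by cases n <;> rfl
lemma gb_R (q : ℂ) : ∀ n k : ℕ,
    (1 - q ^ (n - k)) * gaussBinom q n k = (1 - q ^ (k + 1)) * gaussBinom q n (k + 1) := by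
  intro n
  induction n with
  | zero =>
    intro k
    match k with
    | 0 => simp [gaussBinom]
    | k+1 => simp [gaussBinom, gb_zero q 0 (k+2) (by omega)]
  | succ n ih =>
    intro k
    match k with
    | 0 =>
      have h := ih 0
      rw [Nat.sub_zero] at h ⊢
      rw [gb_zero_right] at h ⊢
      rw [gb_succ_succ, gb_zero_right]
      linear_combination q * h
    | k+1 =>
      rcases Nat.lt_or_ge k n with hk | hk
      · obtain ⟨m, hm⟩ : ∃ m, n - k = m + 1 := ⟨n - k - 1, by omega⟩
        have h1 := ih k
        have h2 := ih (k+1)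
        have hm1 : n - (k+1) = m := by omega
        rw [hm] at h1
        rw [hm1] at h2
        have e : n + 1 - (k + 1) = m + 1 := by omega
        rw [e, gb_succ_succ, gb_succ_succ]
        linear_combination h1 + q^(k+2) * h2
      · rcases Nat.lt_or_ge n k with hk2 | hk2
        · rw [gb_zero q (n+1) (k+1) (by omega), gb_zero q (n+1) (k+2) (by omega)]; ring
        · have hkn : k = n := by omega
          subst hkn
          rw [gb_zero q (k+1) (k+2) (by omega)]
          simp
lemma gb_L (q : ℂ) (n k : ℕ) :
    (1 - q ^ (k + 1)) * gaussBinom q (n+1) (k+1) = (1 - q ^ (n + 1)) * gaussBinom q n k := by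
  rcases le_or_gt k n with hk | hk
  · obtain ⟨m, hm⟩ : ∃ m, n = k + m := ⟨n - k, by omega⟩
    subst hm
    have h := gb_R q (k+m) k
    rw [show k + m - k = m by omega] at h
    rw [gb_succ_succ]
    linear_combination (-(q^(k+1))) * h
  · rw [gb_zero q (n+1) (k+1) (by omega), gb_zero q n k (by omega)]; ring
lemma chebT_int (x : ℂ) (m : ℤ) :
    2 * x * chebT x m.natAbs = chebT x (m + 1).natAbs + chebT x (m - 1).natAbs := by
  match m with
  | Int.ofNat 0 => show 2 * x * chebT x 0 = chebT x 1 + chebT x 1; simp [chebT]; ring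
  | Int.ofNat (n+1) =>
    have h1 : ((Int.ofNat (n+1)) + 1).natAbs = n + 2 := rfl
    have h2 : ((Int.ofNat (n+1)) - 1).natAbs = n := by
      simp only [Int.ofNat_eq_coe]
      omega
    rw [h1, h2]
    show 2 * x * chebT x (n+1) = chebT x (n+2) + chebT x n
    show 2 * x * chebT x (n+1) = (2 * x * chebT x (n + 1) - chebT x n) + chebT x n
    ring
  | Int.negSucc n =>
    have h1 : ((Int.negSucc n) + 1).natAbs = n := by
      simp only [Int.negSucc_eq]
      omega
    have h2 : ((Int.negSucc n) - 1).natAbs = n + 2 := by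
      simp only [Int.negSucc_eq]
      omega
    have h0 : (Int.negSucc n).natAbs = n + 1 := rfl
    rw [h0, h1, h2]
    show 2 * x * chebT x (n+1) = chebT x n + (2 * x * chebT x (n + 1) - chebT x n)
    ring

/-- `h_n(x|q) = ∑_{k=0}^n [n choose k]_q T_{n-2k}(x)` where `T` is extended to negative
indices by `T_{-m} = T_m` (implemented via the absolute value of the index). -/
theorem qHermite_eq_sum_chebT (n : ℕ) (x q : ℂ) :
    qHermite q x n =
      ∑ k ∈ Finset.range (n + 1),
        gaussBinom q n k * chebT x ((n : ℤ) - 2 * k).natAbs := by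
  induction n using Nat.twoStepInduction with
  | zero => simp [qHermite, gaussBinom, chebT]
  | one =>
    rw [Finset.sum_range_succ, Finset.sum_range_one]
    norm_num [qHermite, gaussBinom, chebT]
    ring
  | more n ih1 ih2 =>
    have hh : qHermite q x (n+2) = 2 * x * qHermite q x (n + 1) - (1 - q ^ (n + 1)) * qHermite q x n := rfl
    rw [hh, ih1, ih2, Finset.mul_sum]
    -- expand 2x * terms
    have e1 : ∑ k ∈ Finset.range (n+2),
        2 * x * (gaussBinom q (n+1) k * chebT x (((n+1 : ℕ) : ℤ) - 2 * k).natAbs)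
      = ∑ k ∈ Finset.range (n+2),
        (gaussBinom q (n+1) k * chebT x (((n : ℤ) + 2) - 2 * k).natAbs
          + gaussBinom q (n+1) k * chebT x ((n : ℤ) - 2 * k).natAbs) := by
      refine Finset.sum_congr rfl fun k _ => ?_
      have h := chebT_int x (((n : ℤ) + 1) - 2 * k)
      rw [show ((n : ℤ) + 1) - 2 * k + 1 = ((n : ℤ) + 2) - 2 * k by ring,
          show ((n : ℤ) + 1) - 2 * k - 1 = (n : ℤ) - 2 * k by ring] at h
      have harg : (((n+1 : ℕ) : ℤ) - 2 * k) = ((n : ℤ) + 1) - 2 * k := by push_cast; ring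
      rw [harg]
      linear_combination gaussBinom q (n+1) k * h
    rw [e1, Finset.sum_add_distrib]
    -- RHS: peel off k = 0
    conv_rhs => rw [Finset.sum_range_succ']
    have e2 : ∑ k ∈ Finset.range (n+2),
        gaussBinom q (n+2) (k+1) * chebT x (((n+2 : ℕ) : ℤ) - 2 * ((k+1 : ℕ) : ℤ)).natAbs
      = ∑ k ∈ Finset.range (n+2),
        (gaussBinom q (n+1) k * chebT x ((n : ℤ) - 2 * k).natAbs
          + q^(k+1) * (gaussBinom q (n+1) (k+1) * chebT x ((n : ℤ) - 2 * k).natAbs)) := by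
      refine Finset.sum_congr rfl fun k _ => ?_
      rw [gb_succ_succ]
      have harg : (((n+2 : ℕ) : ℤ) - 2 * ((k+1 : ℕ) : ℤ)) = (n : ℤ) - 2 * k := by push_cast; ring
      rw [harg]; ring
    rw [e2, Finset.sum_add_distrib]
    -- first sum on the left split: peel off k = 0
    have e3 : ∑ k ∈ Finset.range (n+2),
        gaussBinom q (n+1) k * chebT x (((n : ℤ) + 2) - 2 * k).natAbs
      = (∑ k ∈ Finset.range (n+1),
          gaussBinom q (n+1) (k+1) * chebT x ((n : ℤ) - 2 * k).natAbs)
        + chebT x (n+2) := by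
      rw [Finset.sum_range_succ']
      congr 1
      · refine Finset.sum_congr rfl fun k _ => ?_
        have harg : ((n : ℤ) + 2) - 2 * ((k+1 : ℕ) : ℤ) = (n : ℤ) - 2 * k := by push_cast; ring
        rw [harg]
      · rw [gb_zero_right]
        have harg : (((n : ℤ) + 2) - 2 * ((0 : ℕ) : ℤ)).natAbs = n + 2 := by
          norm_num
          omega
        rw [harg, one_mul]
    rw [e3]
    -- q^(k+1) sum: last term vanishes
    have e4 : ∑ k ∈ Finset.range (n+2),
        q^(k+1) * (gaussBinom q (n+1) (k+1) * chebT x ((n : ℤ) - 2 * k).natAbs)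
      = ∑ k ∈ Finset.range (n+1),
        q^(k+1) * (gaussBinom q (n+1) (k+1) * chebT x ((n : ℤ) - 2 * k).natAbs) := by
      rw [Finset.sum_range_succ, gb_zero q (n+1) (n+2) (by omega)]
      simp
    rw [e4]
    -- key termwise identity
    have e5 : ∑ k ∈ Finset.range (n+1),
        gaussBinom q (n+1) (k+1) * chebT x ((n : ℤ) - 2 * k).natAbs
      - ∑ k ∈ Finset.range (n+1),
        q^(k+1) * (gaussBinom q (n+1) (k+1) * chebT x ((n : ℤ) - 2 * k).natAbs)
      = (1 - q^(n+1)) * ∑ k ∈ Finset.range (n+1),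
          gaussBinom q n k * chebT x ((n : ℤ) - 2 * k).natAbs := by
      rw [Finset.mul_sum, ← Finset.sum_sub_distrib]
      refine Finset.sum_congr rfl fun k _ => ?_
      linear_combination chebT x ((n : ℤ) - 2 * k).natAbs * gb_L q n k
    have e6 : (((n+2 : ℕ) : ℤ) - 2 * ((0:ℕ) : ℤ)).natAbs = n + 2 := by norm_num; omega
    rw [gb_zero_right, e6, one_mul]
    linear_combination e5
end
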